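/- Let C be a p×p symmetric positive definite matrix with eigenvalues λ₁,…,λ_p > 0, and 0 < d < 1. Then the trace of W_d C⁻¹ W_d', where W_d = I − (1−d)²(C+I)⁻², equals ∑ⱼ [1 − (1−d)²/(λⱼ+1)²]² / λⱼ, and this is strictly less than tr(C⁻¹) = ∑ⱼ 1/λⱼ. -/
import Mathlib


open Matrix

theorem trace_Wd_Cinv_Wd {p : ℕ} (C : Matrix (Fin p) (Fin p) ℝ) (hC : C.PosDef)
    (d : ℝ) (hd0 : 0 < d) (hd1 : d < 1) :
    let W : Matrix (Fin p) (Fin p) ℝ := 1 - (1 - d)^2 • ((C + 1)⁻¹)^2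
    (W * C⁻¹ * Wᵀ).trace
        = ∑ j, (1 - (1 - d)^2 / (hC.1.eigenvalues j + 1)^2)^2 / hC.1.eigenvalues j ∧
      (0 < p → (W * C⁻¹ * Wᵀ).trace < C⁻¹.trace) := by
  intro W
  have hH := hC.1
  set V : Matrix (Fin p) (Fin p) ℝ := (hH.eigenvectorUnitary : Matrix (Fin p) (Fin p) ℝ) with hVdef
  set L : Fin p → ℝ := hH.eigenvalues with hLdef
  have hLpos : ∀ j, 0 < L j := hC.eigenvalues_pos
  have hVsV : star V * V = 1 := Matrix.mem_unitaryGroup_iff'.mp hH.eigenvectorUnitary.2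
  have hVVs : V * star V = 1 := Matrix.mem_unitaryGroup_iff.mp hH.eigenvectorUnitary.2
  set Φ : (Fin p → ℝ) → Matrix (Fin p) (Fin p) ℝ := fun f => V * diagonal f * star V with hΦ
  have Φ_mul : ∀ f g, Φ f * Φ g = Φ (f * g) := by
    intro f g
    show (V * diagonal f * star V) * (V * diagonal g * star V) = V * diagonal (f * g) * star V
    calc (V * diagonal f * star V) * (V * diagonal g * star V)
        = V * diagonal f * (star V * V) * diagonal g * star V := by noncomm_ring
      _ = V * (diagonal f * diagonal g) * star V := by rw [hVsV]; noncomm_ring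
      _ = V * diagonal (f * g) * star V := by rw [diagonal_mul_diagonal]; rfl
  have Φ_one : Φ 1 = 1 := by
    show V * diagonal (fun _ => (1:ℝ)) * star V = 1
    rw [diagonal_one, mul_one, hVVs]
  have Φ_sub : ∀ f g, Φ f - Φ g = Φ (f - g) := by
    intro f g
    show V * diagonal f * star V - V * diagonal g * star V
        = V * diagonal (fun i => f i - g i) * star V
    rw [← diagonal_sub, Matrix.mul_sub, Matrix.sub_mul]
  have Φ_add : ∀ f g, Φ f + Φ g = Φ (f + g) := by
    intro f g
    show V * diagonal f * star V + V * diagonal g * star V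
        = V * diagonal (fun i => f i + g i) * star V
    rw [← diagonal_add, Matrix.mul_add, Matrix.add_mul]
  have Φ_smul : ∀ (c : ℝ) f, c • Φ f = Φ (c • f) := by
    intro c f
    show c • (V * diagonal f * star V) = V * diagonal (c • f) * star V
    rw [diagonal_smul, Matrix.mul_smul, Matrix.smul_mul]
  have Φ_inv : ∀ f, (∀ j, f j ≠ 0) → (Φ f)⁻¹ = Φ f⁻¹ := by
    intro f hf
    refine Matrix.inv_eq_left_inv ?_
    rw [Φ_mul]
    convert Φ_one using 2
    funext j
    exact inv_mul_cancel₀ (hf j)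
  have Φ_trace : ∀ f, (Φ f).trace = ∑ j, f j := by
    intro f
    show (V * diagonal f * star V).trace = _
    rw [Matrix.trace_mul_cycle, hVsV, one_mul, trace_diagonal]
  have hsV : star V = Vᵀ := conjTranspose_eq_transpose_of_trivial V
  have Φ_transpose : ∀ f, (Φ f)ᵀ = Φ f := by
    intro f
    show (V * diagonal f * star V)ᵀ = V * diagonal f * star V
    rw [hsV, transpose_mul, transpose_mul, transpose_transpose, diagonal_transpose, ← mul_assoc]
  have hCspec : C = Φ L := by
    have := hH.spectral_theorem
    simpa [hΦ, Function.comp] using this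
  have hCinv : C⁻¹ = Φ L⁻¹ := by
    rw [hCspec, Φ_inv _ (fun j => (hLpos j).ne')]
  set w : Fin p → ℝ := fun j => 1 - (1 - d)^2 / (L j + 1)^2 with hw
  have hL1 : ∀ j, L j + 1 ≠ 0 := fun j => by have := hLpos j; intro h; linarith
  have hWspec : W = Φ w := by
    have h1 : (C + 1 : Matrix (Fin p) (Fin p) ℝ) = Φ (L + 1) := by
      rw [hCspec, ← Φ_one, Φ_add]
    have h2 : (C + 1 : Matrix (Fin p) (Fin p) ℝ)⁻¹ = Φ (L + 1)⁻¹ := by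
      rw [h1, Φ_inv _ (fun j => by simpa using hL1 j)]
    show 1 - (1 - d)^2 • ((C + 1)⁻¹)^2 = Φ w
    rw [h2, pow_two (Φ (L + 1)⁻¹), Φ_mul, Φ_smul, ← Φ_one, Φ_sub]
    refine congrArg Φ ?_
    funext j
    have := hL1 j
    simp only [hw, Pi.sub_apply, Pi.one_apply, Pi.smul_apply, Pi.mul_apply, Pi.inv_apply,
      Pi.add_apply, smul_eq_mul]
    rw [div_eq_mul_inv, ← mul_inv, ← pow_two]
  have key : (W * C⁻¹ * Wᵀ).trace = ∑ j, w j * (L j)⁻¹ * w j := by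
    rw [hWspec, hCinv, Φ_transpose, Φ_mul, Φ_mul, Φ_trace]
    rfl
  have hterm : ∀ j, w j * (L j)⁻¹ * w j = (1 - (1 - d)^2 / (L j + 1)^2)^2 / L j := by
    intro j
    show (1 - (1 - d)^2 / (L j + 1)^2) * (L j)⁻¹ * (1 - (1 - d)^2 / (L j + 1)^2) = _
    rw [pow_two, div_eq_mul_inv]
    ring
  constructor
  · rw [key]
    exact Finset.sum_congr rfl fun j _ => hterm j
  · intro hp
    rw [key, hCinv, Φ_trace]
    haveI : Nonempty (Fin p) := Fin.pos_iff_nonempty.mp hp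
    apply Finset.sum_lt_sum_of_nonempty Finset.univ_nonempty
    intro j _
    have hLj := hLpos j
    have hc : 0 < (1 - d)^2 := pow_pos (by linarith) 2
    have hc1 : (1 - d)^2 < 1 := by nlinarith
    have hden : 1 ≤ (L j + 1)^2 := by nlinarith
    have hdiv : 0 < (1 - d)^2 / (L j + 1)^2 := div_pos hc (pow_pos (by linarith) 2)
    have hdiv1 : (1 - d)^2 / (L j + 1)^2 < 1 :=
      (div_lt_one (pow_pos (by linarith) 2)).mpr (lt_of_lt_of_le hc1 hden)
    have hw0 : 0 < w j := by show 0 < 1 - (1 - d)^2 / (L j + 1)^2; linarith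
    have hw1 : w j < 1 := by show 1 - (1 - d)^2 / (L j + 1)^2 < 1; linarith
    have hLi : 0 < (L j)⁻¹ := inv_pos.mpr hLj
    have hw2 : w j * w j < 1 := by nlinarith
    have : w j * (L j)⁻¹ * w j < (L j)⁻¹ := by
      calc w j * (L j)⁻¹ * w j = (w j * w j) * (L j)⁻¹ := by ring
        _ < 1 * (L j)⁻¹ := mul_lt_mul_of_pos_right hw2 hLi
        _ = (L j)⁻¹ := one_mul _
    simpa using this
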